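/- arXiv:2305.16028 — 3 statements merged into one kernel-verified Lean document; each statement's English description precedes it below -/
import Mathlib

section
/- Let f : ℝ → ℂ be given by f(t) = Σ_{k} ξ_k e^{i λ_k t} where (ξ_k) is a square-summable sequence of complex numbers and (λ_k) a sequence of reals. If additionally Σ_k |ξ_k| < ∞ (so the series converges uniformly) and f is not identically zero, then f does not tend to 0 as t → ∞. -/
open Filter Complex

lemma aux_norm_exp (c t : ℝ) : ‖Complex.exp (Complex.I * (c : ℂ) * (t : ℂ))‖ = 1 := by
  have h : Complex.I * (c : ℂ) * (t : ℂ) = ((c * t : ℝ) : ℂ) * Complex.I := by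
    push_cast; ring
  rw [h, Complex.norm_exp_ofReal_mul_I]

-- Cesàro mean of a function tending to 0 tends to 0.
lemma aux_cesaro (g : ℝ → ℂ) (hcont : Continuous g)
    (hg : Tendsto g atTop (nhds 0)) :
    Tendsto (fun T : ℝ => (T : ℂ)⁻¹ * ∫ t in (0:ℝ)..T, g t) atTop (nhds 0) := by
  rw [Metric.tendsto_atTop]
  intro ε hε
  have hε2 : (0:ℝ) < ε / 2 := by linarith
  obtain ⟨M0, hM0⟩ := (Metric.tendsto_atTop.1 hg (ε/2) hε2)
  set M : ℝ := max M0 0 with hM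
  have hMnn : 0 ≤ M := le_max_right _ _
  set C : ℝ := ‖∫ t in (0:ℝ)..M, g t‖ with hC
  have hCnn : 0 ≤ C := norm_nonneg _
  refine ⟨max (max M 1) (2 * C / ε + 1), fun T hT => ?_⟩
  have hTM : M ≤ T := le_trans (le_trans (le_max_left _ _) (le_max_left _ _)) hT
  have hT1 : (1:ℝ) ≤ T := le_trans (le_trans (le_max_right _ _) (le_max_left _ _)) hT
  have hTC : 2 * C / ε + 1 ≤ T := le_trans (le_max_right _ _) hT
  have hTpos : (0:ℝ) < T := lt_of_lt_of_le one_pos hT1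
  have hint : ∀ a b : ℝ, IntervalIntegrable g MeasureTheory.volume a b :=
    fun a b => hcont.intervalIntegrable a b
  have hsplit : (∫ t in (0:ℝ)..T, g t) = (∫ t in (0:ℝ)..M, g t) + ∫ t in M..T, g t :=
    (intervalIntegral.integral_add_adjacent_intervals (hint 0 M) (hint M T)).symm
  have htail : ‖∫ t in M..T, g t‖ ≤ (ε/2) * |T - M| := by
    apply intervalIntegral.norm_integral_le_of_norm_le_const
    intro x hx
    rw [Set.uIoc_of_le hTM] at hx
    have hxM : M0 ≤ x := le_trans (le_max_left _ _) (le_of_lt hx.1)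
    have := hM0 x hxM
    rw [dist_eq_norm, sub_zero] at this
    exact this.le
  have habsTM : |T - M| = T - M := abs_of_nonneg (by linarith)
  have hnorm : ‖(T : ℂ)⁻¹ * ∫ t in (0:ℝ)..T, g t‖ ≤ T⁻¹ * (C + (ε/2) * (T - M)) := by
    rw [norm_mul]
    have h1 : ‖((T : ℝ) : ℂ)⁻¹‖ = T⁻¹ := by
      rw [norm_inv, Complex.norm_real, Real.norm_eq_abs, abs_of_pos hTpos]
    rw [h1]
    apply mul_le_mul_of_nonneg_left _ (inv_nonneg.2 hTpos.le)
    rw [hsplit]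
    calc ‖(∫ t in (0:ℝ)..M, g t) + ∫ t in M..T, g t‖
        ≤ C + ‖∫ t in M..T, g t‖ := norm_add_le _ _
      _ ≤ C + (ε/2) * (T - M) := by
          have := htail; rw [habsTM] at this; linarith
  rw [dist_eq_norm, sub_zero]
  refine lt_of_le_of_lt hnorm ?_
  have key : T⁻¹ * (C + (ε/2) * (T - M)) < ε := by
    rw [inv_mul_lt_iff₀ hTpos]
    have h2 : C < (ε/2) * T := by
      nlinarith [mul_le_mul_of_nonneg_right (show 2*C/ε ≤ T - 1 by linarith) hε.le,
        div_mul_cancel₀ (2*C) (ne_of_gt hε)]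
    nlinarith
  exact key


/-- An absolutely convergent almost periodic trigonometric series with
square-summable coefficients which is not identically zero does not tend
to `0` as `t → ∞`. -/
theorem stmt0 (ξ : ℕ → ℂ) (lam : ℕ → ℝ) (hinj : Function.Injective lam)
    (habs : Summable fun k => ‖ξ k‖) (hsq : Summable fun k => ‖ξ k‖ ^ 2)
    (f : ℝ → ℂ)
    (hf : ∀ t : ℝ, f t = ∑' k, ξ k * Complex.exp (Complex.I * (lam k : ℂ) * (t : ℂ)))
    (hne : ∃ t : ℝ, f t ≠ 0) :
    ¬ Tendsto f atTop (nhds (0 : ℂ)) := by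
  intro hT
  -- there is a nonzero coefficient
  obtain ⟨k0, hk0⟩ : ∃ k, ξ k ≠ 0 := by
    by_contra h
    push_neg at h
    obtain ⟨t, ht⟩ := hne
    exact ht (by rw [hf t]; simp [h])
  -- continuity of f
  have hterm_norm : ∀ (k : ℕ) (t : ℝ),
      ‖ξ k * Complex.exp (Complex.I * (lam k : ℂ) * (t : ℂ))‖ = ‖ξ k‖ := by
    intro k t; rw [norm_mul, aux_norm_exp, mul_one]
  have hcont : Continuous f := by
    have h1 : Continuous fun t : ℝ =>
        ∑' k, ξ k * Complex.exp (Complex.I * (lam k : ℂ) * (t : ℂ)) :=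
      continuous_tsum (fun k => by fun_prop) habs (fun k t => (hterm_norm k t).le)
    exact h1.congr fun t => (hf t).symm
  set c : ℕ → ℂ := fun j => (lam j : ℂ) - (lam k0 : ℂ) with hc
  have hcast : ∀ j, c j = ((lam j - lam k0 : ℝ) : ℂ) := by intro j; rw [hc]; push_cast; ring
  set F : ℕ → ℝ → ℂ := fun j t => ξ j * Complex.exp (Complex.I * c j * (t : ℂ)) with hFdef
  set g : ℝ → ℂ := fun t => f t * Complex.exp (-(Complex.I * (lam k0 : ℂ) * (t : ℂ))) with hgdef
  have hgcont : Continuous g := by rw [hgdef]; fun_prop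
  have hFcont : ∀ j, Continuous (F j) := by intro j; rw [hFdef]; fun_prop
  have hFnorm : ∀ (j : ℕ) (t : ℝ), ‖F j t‖ = ‖ξ j‖ := by
    intro j t
    simp only [hFdef]
    rw [hcast j, norm_mul, aux_norm_exp, mul_one]
  have hg0 : Tendsto g atTop (nhds 0) := by
    rw [tendsto_zero_iff_norm_tendsto_zero] at hT ⊢
    refine hT.congr fun t => ?_
    simp only [hgdef, norm_mul]
    have he : Complex.exp (-(Complex.I * (lam k0 : ℂ) * (t : ℂ)))
        = Complex.exp (Complex.I * ((-lam k0 : ℝ) : ℂ) * (t : ℂ)) := by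
      congr 1; push_cast; ring
    rw [he, aux_norm_exp, mul_one]
  have hgF : ∀ t : ℝ, g t = ∑' j, F j t := by
    intro t
    have h1 : g t = (∑' k, ξ k * Complex.exp (Complex.I * (lam k : ℂ) * (t : ℂ)))
        * Complex.exp (-(Complex.I * (lam k0 : ℂ) * (t : ℂ))) := by
      simp only [hgdef, hf t]
    rw [h1, ← tsum_mul_right]
    refine tsum_congr fun j => ?_
    simp only [hFdef, hc]
    rw [mul_assoc, ← Complex.exp_add]
    congr 2
    ring
  have hFsummable : ∀ t : ℝ, Summable fun j => F j t := by
    intro t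
    exact Summable.of_norm (habs.congr fun j => (hFnorm j t).symm)
  -- swap sum and integral
  have hswap : ∀ T : ℝ, (∫ t in (0:ℝ)..T, g t)
      = ∑' j, ξ j * ∫ t in (0:ℝ)..T, Complex.exp (Complex.I * c j * (t : ℂ)) := by
    intro T
    have hsum : HasSum (fun j => ∫ t in (0:ℝ)..T, F j t) (∫ t in (0:ℝ)..T, g t) := by
      apply intervalIntegral.hasSum_integral_of_dominated_convergence (fun j _ => ‖ξ j‖)
      · exact fun j => (hFcont j).aestronglyMeasurable
      · intro j; filter_upwards with t _; exact (hFnorm j t).le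
      · filter_upwards with t _; exact habs
      · exact intervalIntegrable_const
      · filter_upwards with t _
        rw [hgF t]
        exact (hFsummable t).hasSum
    rw [← hsum.tsum_eq]
    refine tsum_congr fun j => ?_
    simp only [hFdef]
    exact intervalIntegral.integral_const_mul _ _
  -- the averaged function
  set A : ℝ → ℂ := fun T => (T : ℂ)⁻¹ * ∫ t in (0:ℝ)..T, g t with hA
  set B : ℕ → ℝ → ℂ := fun j T =>
    (T : ℂ)⁻¹ * (ξ j * ∫ t in (0:ℝ)..T, Complex.exp (Complex.I * c j * (t : ℂ))) with hB
  have hAB : ∀ T : ℝ, A T = ∑' j, B j T := by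
    intro T
    simp only [hA, hB]
    rw [hswap T, tsum_mul_left]
  -- A tends to ξ k0
  have hAk : Tendsto A atTop (nhds (ξ k0)) := by
    have hlim : Tendsto (fun T => ∑' j, B j T) atTop
        (nhds (∑' j, if j = k0 then ξ k0 else 0)) := by
      apply tendsto_tsum_of_dominated_convergence habs
      · intro j
        by_cases hj : j = k0
        · subst hj
          simp only [if_pos rfl]
          apply Tendsto.congr' _ tendsto_const_nhds
          filter_upwards [eventually_gt_atTop (0:ℝ)] with T hTpos
          have hTne : (T : ℂ) ≠ 0 := Complex.ofReal_ne_zero.mpr hTpos.ne'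
          have hc0 : c j = 0 := by rw [hc]; exact sub_self _
          have hone : (∫ t in (0:ℝ)..T, Complex.exp (Complex.I * c j * (t : ℂ))) = (T : ℂ) := by
            simp [hc0]
          simp only [hB, hone, if_pos rfl, eq_self_iff_true, if_true]
          field_simp
        · simp only [if_neg hj]
          have hcj : c j ≠ 0 := by
            rw [hcast j]
            simp only [ne_eq, Complex.ofReal_eq_zero, sub_eq_zero]
            exact fun h => hj (hinj h)
          have hIc : Complex.I * c j ≠ 0 := mul_ne_zero Complex.I_ne_zero hcj
          rw [tendsto_zero_iff_norm_tendsto_zero]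
          apply squeeze_zero' (Eventually.of_forall fun T => norm_nonneg _)
            (g := fun T : ℝ => (‖ξ j‖ * (2 / ‖Complex.I * c j‖)) * T⁻¹)
          · filter_upwards [eventually_gt_atTop (0:ℝ)] with T hTpos
            have hI : (∫ t in (0:ℝ)..T, Complex.exp (Complex.I * c j * (t : ℂ)))
                = (Complex.exp (Complex.I * c j * (T : ℂ))
                    - Complex.exp (Complex.I * c j * ((0:ℝ) : ℂ))) / (Complex.I * c j) :=
              integral_exp_mul_complex hIc
            have hnum : ‖Complex.exp (Complex.I * c j * (T : ℂ))
                - Complex.exp (Complex.I * c j * ((0:ℝ) : ℂ))‖ ≤ 2 := by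
              refine (norm_sub_le _ _).trans ?_
              rw [hcast j, aux_norm_exp, aux_norm_exp]
              norm_num
            simp only [hB]
            rw [hI, norm_mul, norm_mul, norm_div, norm_inv, Complex.norm_real,
              Real.norm_eq_abs, abs_of_pos hTpos]
            rw [mul_comm (‖ξ j‖ * (2 / ‖Complex.I * c j‖)) T⁻¹]
            gcongr
          · have : Tendsto (fun T : ℝ => T⁻¹) atTop (nhds 0) := tendsto_inv_atTop_zero
            simpa using this.const_mul (‖ξ j‖ * (2 / ‖Complex.I * c j‖))
      · filter_upwards [eventually_gt_atTop (0:ℝ)] with T hTpos j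
        have hint : ‖∫ t in (0:ℝ)..T, Complex.exp (Complex.I * c j * (t : ℂ))‖ ≤ 1 * |T - 0| := by
          apply intervalIntegral.norm_integral_le_of_norm_le_const
          intro x _
          rw [hcast j, aux_norm_exp]
        rw [sub_zero, abs_of_pos hTpos, one_mul] at hint
        simp only [hB]
        rw [norm_mul, norm_mul, norm_inv, Complex.norm_real, Real.norm_eq_abs,
          abs_of_pos hTpos]
        calc T⁻¹ * (‖ξ j‖ * ‖∫ t in (0:ℝ)..T, Complex.exp (Complex.I * c j * (t : ℂ))‖)
            ≤ T⁻¹ * (‖ξ j‖ * T) := by gcongr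
          _ = ‖ξ j‖ := by field_simp
    rw [tsum_ite_eq k0 (fun _ => ξ k0)] at hlim
    exact hlim.congr fun T => (hAB T).symm
  -- A tends to 0
  have hA0 : Tendsto A atTop (nhds 0) := aux_cesaro g hgcont hg0
  exact hk0 (tendsto_nhds_unique hAk hA0)
end

section
/- Let f ∈ L¹(ℝ₊, ℂ) (a Lebesgue-integrable function on the positive half-line). Then the Laplace-type transform F(z) = ∫_0^∞ f(ω) e^{iωz} dω, defined for complex z with Im z ≥ 0, satisfies F(z) → 0 as |z| → ∞ within the closed upper half-plane. -/
open Filter Complex MeasureTheory Set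

private lemma norm_exp_le' (z : ℂ) (hz : 0 ≤ z.im) {ω : ℝ} (hω : 0 ≤ ω) :
    ‖Complex.exp (Complex.I * ω * z)‖ ≤ 1 := by
  rw [Complex.norm_exp]
  have : (Complex.I * ω * z).re = -(ω * z.im) := by
    simp [Complex.mul_re, Complex.mul_im]
  rw [this, Real.exp_le_one_iff]
  simpa using mul_nonneg hω hz

private lemma Ioc_transform {a b : ℝ} (hab : a ≤ b) {z : ℂ} (hz : z ≠ 0) :
    ∫ ω in Set.Ioc a b, Complex.exp (Complex.I * ω * z) =
      (Complex.exp (Complex.I * z * b) - Complex.exp (Complex.I * z * a)) / (Complex.I * z) := by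
  rw [← intervalIntegral.integral_of_le hab]
  have h0 : Complex.I * z ≠ 0 := mul_ne_zero Complex.I_ne_zero hz
  rw [← integral_exp_mul_complex h0]
  apply intervalIntegral.integral_congr
  intro ω _
  ring_nf

private lemma Ioc_transform_norm {a b : ℝ} (ha : 0 ≤ a) (hab : a ≤ b) {z : ℂ}
    (hzi : 0 ≤ z.im) :
    ‖(Complex.exp (Complex.I * z * b) - Complex.exp (Complex.I * z * a)) / (Complex.I * z)‖
      ≤ 2 / ‖z‖ := by
  rw [norm_div]
  have hb : ‖Complex.exp (Complex.I * z * b)‖ ≤ 1 := by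
    rw [show Complex.I * z * b = Complex.I * b * z by ring]
    exact norm_exp_le' z hzi (ha.trans hab)
  have ha' : ‖Complex.exp (Complex.I * z * a)‖ ≤ 1 := by
    rw [show Complex.I * z * a = Complex.I * a * z by ring]
    exact norm_exp_le' z hzi ha
  have hIz : ‖Complex.I * z‖ = ‖z‖ := by simp
  rw [hIz]
  gcongr
  calc ‖_ - _‖ ≤ _ + _ := norm_sub_le _ _
  _ ≤ 1 + 1 := add_le_add hb ha'
  _ = 2 := by norm_num

private lemma exists_mem_partition {A : ℝ} (hA : 0 < A) {n : ℕ} (hn : 0 < n) {ω : ℝ}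
    (hω : ω ∈ Set.Ioc 0 A) :
    ∃ i : ℕ, i < n ∧ ω ∈ Set.Ioc ((i : ℝ) * A / n) (((i : ℝ) + 1) * A / n) := by
  obtain ⟨hω0, hωA⟩ := hω
  have hn' : (0 : ℝ) < n := Nat.cast_pos.2 hn
  set k : ℕ := ⌈ω * n / A⌉₊ with hk
  have hpos : 0 < ω * n / A := div_pos (mul_pos hω0 hn') hA
  have hk1 : 1 ≤ k := Nat.one_le_ceil_iff.2 hpos
  have hkn : k ≤ n := by
    apply Nat.ceil_le.2
    rw [div_le_iff₀ hA]
    calc ω * n ≤ A * n := by nlinarith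
    _ = (n : ℝ) * A := by ring
  have hcast : ((k - 1 : ℕ) : ℝ) = (k : ℝ) - 1 := by
    push_cast [Nat.cast_sub hk1]; ring
  refine ⟨k - 1, by omega, ?_, ?_⟩
  · rw [div_lt_iff₀ hn']
    have h1 : ((k - 1 : ℕ) : ℝ) < ω * n / A := by
      rw [hcast]
      have := Nat.lt_ceil.1 (show k - 1 < k by omega)
      rw [hcast] at this; linarith
    exact (lt_div_iff₀ hA).1 h1
  · rw [le_div_iff₀ hn']
    have h2 : ω * n / A ≤ ((k - 1 : ℕ) : ℝ) + 1 := by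
      rw [hcast]
      have := Nat.le_ceil (ω * n / A)
      linarith
    exact (div_le_iff₀ hA).1 h2

set_option maxHeartbeats 1000000 in
/-- Riemann–Lebesgue for Fourier–Laplace transforms: if `f ∈ L¹(ℝ₊)` then
`F(z) = ∫_0^∞ f(ω) e^{iωz} dω` tends to `0` as `|z| → ∞` within the closed
upper half-plane. -/
theorem stmt8 (f : ℝ → ℂ) (hf : IntegrableOn f (Set.Ioi (0 : ℝ)))
    (F : ℂ → ℂ)
    (hF : ∀ z : ℂ, 0 ≤ z.im →
      F z = ∫ ω in Set.Ioi (0 : ℝ), f ω * Complex.exp (Complex.I * (ω : ℂ) * z)) :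
    Tendsto F (cocompact ℂ ⊓ Filter.principal {z : ℂ | 0 ≤ z.im}) (nhds (0 : ℂ)) := by
  rw [NormedAddCommGroup.tendsto_nhds_zero]
  intro ε hε
  -- the indicator function, globally integrable
  set h : ℝ → ℂ := (Set.Ioi (0 : ℝ)).indicator f with hhdef
  have hh : Integrable h := (integrable_indicator_iff measurableSet_Ioi).2 hf
  -- continuous compactly supported approximation
  obtain ⟨g, gsupp, gL1, gcont, gint⟩ :=
    hh.exists_hasCompactSupport_integral_sub_le (show (0:ℝ) < ε / 6 by linarith)
  -- support bound
  obtain ⟨r, hr⟩ := gsupp.isBounded.subset_closedBall (0 : ℝ)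
  set A : ℝ := max r 1 with hAdef
  have hA : 0 < A := lt_of_lt_of_le one_pos (le_max_right _ _)
  have hgA : ∀ ω : ℝ, A < ω → g ω = 0 := by
    intro ω hω
    by_contra hne
    have h1 : ω ∈ tsupport g := subset_tsupport g hne
    have h2 := hr h1
    rw [Metric.mem_closedBall, Real.dist_eq, sub_zero] at h2
    have : ω ≤ A := (le_abs_self ω).trans (h2.trans (le_max_left r 1))
    linarith
  -- uniform continuity
  have gu : UniformContinuous g := gsupp.uniformContinuous_of_continuous gcont
  set ε' : ℝ := ε / (6 * A) with hε'def
  have hε'pos : 0 < ε' := by positivity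
  obtain ⟨δ, hδ, hgδ⟩ := Metric.uniformContinuous_iff.1 gu ε' hε'pos
  -- grid size
  obtain ⟨n, hn⟩ := exists_nat_gt (A / δ)
  have hn0 : 0 < n := by
    have h1 : (0 : ℝ) < n := lt_trans (div_pos hA hδ) hn
    exact_mod_cast h1
  have hn' : (0 : ℝ) < n := Nat.cast_pos.2 hn0
  have hAn : A / n < δ := by
    rw [div_lt_iff₀ hn']
    rw [div_lt_iff₀ hδ] at hn
    linarith
  -- the grid and step function
  set a : ℕ → ℝ := fun i => (i : ℝ) * A / n with hadef
  have ha_mono : Monotone a := by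
    intro i j hij
    simp only [hadef]
    have : (i:ℝ) ≤ j := Nat.cast_le.2 hij
    gcongr
  have ha_nonneg : ∀ i, 0 ≤ a i := fun i => by positivity
  have ha_succ : ∀ i : ℕ, a (i + 1) = ((i : ℝ) + 1) * A / n := by
    intro i; simp only [hadef]; push_cast; ring
  have han : ∀ i : ℕ, a (i + 1) - a i = A / n := by
    intro i; rw [ha_succ]; simp only [hadef]; ring
  have haN : a n = A := by
    simp only [hadef]; field_simp
  set c : ℕ → ℂ := fun i => g (a (i + 1)) with hcdef
  set φ : ℝ → ℂ := fun ω =>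
    ∑ j ∈ Finset.range n, (Set.Ioc (a j) (a (j + 1))).indicator (fun _ => c j) ω with hφdef
  -- value of φ on a cell
  have hφval : ∀ i < n, ∀ ω ∈ Set.Ioc (a i) (a (i + 1)), φ ω = c i := by
    intro i hi ω hω
    simp only [hφdef]
    rw [Finset.sum_eq_single_of_mem i (Finset.mem_range.2 hi)]
    · exact Set.indicator_of_mem hω _
    · intro j _ hji
      apply Set.indicator_of_notMem
      rw [Set.mem_Ioc]
      rcases lt_or_gt_of_ne hji with hlt | hgt
      · push_neg
        intro _
        have : a (j + 1) ≤ a i := ha_mono hlt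
        linarith [hω.1]
      · intro hmem
        have : a (i + 1) ≤ a j := ha_mono hgt
        linarith [hω.2, hmem.1]
  -- φ vanishes above A
  have hφA : ∀ ω : ℝ, A < ω → φ ω = 0 := by
    intro ω hω
    simp only [hφdef]
    apply Finset.sum_eq_zero
    intro j hj
    apply Set.indicator_of_notMem
    rw [Set.mem_Ioc]
    push_neg
    intro _
    have : a (j + 1) ≤ a n := ha_mono (Finset.mem_range.1 hj)
    rw [haN] at this
    linarith
  -- pointwise bound on (0, A]
  have hgφ : ∀ ω ∈ Set.Ioc (0 : ℝ) A, ‖g ω - φ ω‖ ≤ ε' := by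
    intro ω hω
    obtain ⟨i, hi, hmem⟩ := exists_mem_partition hA hn0 hω
    have hmem' : ω ∈ Set.Ioc (a i) (a (i + 1)) := by
      rw [ha_succ]; exact hmem
    rw [hφval i hi ω hmem']
    have hdist : dist ω (a (i + 1)) < δ := by
      rw [Real.dist_eq, abs_sub_comm,
        _root_.abs_of_nonneg (show (0:ℝ) ≤ a (i + 1) - ω by linarith [hmem'.2])]
      have := han i
      linarith [hmem'.1, hmem'.2, hAn]
    exact (le_of_lt (by rw [← dist_eq_norm]; exact hgδ hdist))
  -- global integrability of φ
  have φint : Integrable φ := by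
    apply integrable_finset_sum
    intro j _
    exact (integrable_indicator_iff measurableSet_Ioc).2
      (integrableOn_const measure_Ioc_lt_top.ne)
  -- L¹ bound : ∫_{Ioi 0} ‖f - φ‖ ≤ ε/3
  have LL : ∫ ω in Set.Ioi (0:ℝ), ‖f ω - φ ω‖ ≤ ε / 3 := by
    have e1 : ∫ ω in Set.Ioi (0:ℝ), ‖f ω - φ ω‖ = ∫ ω in Set.Ioi (0:ℝ), ‖h ω - φ ω‖ := by
      apply setIntegral_congr_fun measurableSet_Ioi
      intro ω hω
      simp [hhdef, Set.indicator_of_mem hω]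
    have e2 : ∫ ω in Set.Ioi (0:ℝ), ‖h ω - φ ω‖ ≤
        ∫ ω in Set.Ioi (0:ℝ), (‖h ω - g ω‖ + ‖g ω - φ ω‖) := by
      apply setIntegral_mono_on ((hh.sub φint).norm.integrableOn)
        (((hh.sub gint).norm.add ((gint.sub φint).norm)).integrableOn) measurableSet_Ioi
      intro ω _
      exact norm_sub_le_norm_sub_add_norm_sub _ _ _
    have e3 : ∫ ω in Set.Ioi (0:ℝ), (‖h ω - g ω‖ + ‖g ω - φ ω‖) =
        (∫ ω in Set.Ioi (0:ℝ), ‖h ω - g ω‖) + ∫ ω in Set.Ioi (0:ℝ), ‖g ω - φ ω‖ :=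
      integral_add ((hh.sub gint).norm.integrableOn) ((gint.sub φint).norm.integrableOn)
    have e4 : ∫ ω in Set.Ioi (0:ℝ), ‖h ω - g ω‖ ≤ ε / 6 := by
      refine le_trans (setIntegral_le_integral (hh.sub gint).norm ?_) gL1
      filter_upwards with ω using norm_nonneg _
    have e5 : ∫ ω in Set.Ioi (0:ℝ), ‖g ω - φ ω‖ ≤ ε / 6 := by
      have intgφ : ∀ s : Set ℝ, IntegrableOn (fun ω => ‖g ω - φ ω‖) s := by
        intro s
        have h1 : Integrable (fun ω => g ω - φ ω) := gint.sub φint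
        exact h1.norm.integrableOn
      rw [← Set.Ioc_union_Ioi_eq_Ioi hA.le,
        setIntegral_union (Set.Ioc_disjoint_Ioi le_rfl) measurableSet_Ioi
          (intgφ _) (intgφ _)]
      have z2 : ∫ ω in Set.Ioi A, ‖g ω - φ ω‖ = 0 := by
        apply setIntegral_eq_zero_of_forall_eq_zero
        intro ω hω
        rw [hgA ω hω, hφA ω hω]
        simp
      rw [z2, add_zero]
      have hmon : ∫ ω in Set.Ioc (0:ℝ) A, ‖g ω - φ ω‖ ≤ ∫ _ω in Set.Ioc (0:ℝ) A, ε' := by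
        apply setIntegral_mono_on (intgφ _)
          (integrableOn_const measure_Ioc_lt_top.ne) measurableSet_Ioc
        exact hgφ
      refine hmon.trans ?_
      rw [setIntegral_const, Real.volume_real_Ioc_of_le hA.le, smul_eq_mul,
        sub_zero, hε'def]
      rw [show A * (ε / (6 * A)) = ε / 6 * (A / A) by ring, div_self (ne_of_gt hA), mul_one]
    rw [e1]
    linarith [e2, e3, e4, e5]
  -- the coefficient sum
  set C : ℝ := ∑ j ∈ Finset.range n, ‖c j‖ with hCdef
  have hC : 0 ≤ C := Finset.sum_nonneg fun j _ => norm_nonneg _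
  -- key bound on the half-plane
  have key : ∀ z : ℂ, 0 ≤ z.im → z ≠ 0 → ‖F z‖ ≤ ε / 3 + C * (2 / ‖z‖) := by
    intro z hzi hz0
    set e : ℝ → ℂ := fun ω => Complex.exp (Complex.I * ω * z) with hedef
    have econt : Continuous e :=
      Complex.continuous_exp.comp ((continuous_const.mul Complex.continuous_ofReal).mul
        continuous_const)
    have enorm : ∀ ω : ℝ, 0 ≤ ω → ‖e ω‖ ≤ 1 := fun ω hω => norm_exp_le' z hzi hω
    have int_fe : IntegrableOn (fun ω => f ω * e ω) (Set.Ioi 0) := by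
      apply Integrable.mono' hf.norm
        (hf.aestronglyMeasurable.mul econt.aestronglyMeasurable)
      rw [ae_restrict_iff' measurableSet_Ioi]
      filter_upwards with ω hω
      show ‖f ω * e ω‖ ≤ ‖f ω‖
      rw [norm_mul]
      calc ‖f ω‖ * ‖e ω‖ ≤ ‖f ω‖ * 1 := by gcongr; exact enorm ω (le_of_lt hω)
      _ = ‖f ω‖ := mul_one _
    have hrw : (fun ω => φ ω * e ω) = fun ω => ∑ j ∈ Finset.range n,
        (Set.Ioc (a j) (a (j + 1))).indicator (fun ω' => c j * e ω') ω := by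
      funext ω
      simp only [hφdef]
      rw [Finset.sum_mul]
      apply Finset.sum_congr rfl
      intro j _
      by_cases hm : ω ∈ Set.Ioc (a j) (a (j + 1))
      · simp [Set.indicator_of_mem hm]
      · simp [Set.indicator_of_notMem hm]
    have int_ind : ∀ j : ℕ,
        Integrable ((Set.Ioc (a j) (a (j + 1))).indicator (fun ω' => c j * e ω')) := by
      intro j
      refine (integrable_indicator_iff measurableSet_Ioc).2 ?_
      exact (continuous_const.mul econt).integrableOn_Ioc
    have int_φe : IntegrableOn (fun ω => φ ω * e ω) (Set.Ioi 0) := by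
      rw [hrw]
      exact (integrable_finset_sum _ fun j _ => int_ind j).integrableOn
    have Sval : ∫ ω in Set.Ioi (0:ℝ), φ ω * e ω
        = ∑ j ∈ Finset.range n, c j * ((Complex.exp (Complex.I * z * (a (j + 1)))
            - Complex.exp (Complex.I * z * (a j))) / (Complex.I * z)) := by
      rw [hrw, integral_finset_sum _ (fun j _ => (int_ind j).integrableOn)]
      apply Finset.sum_congr rfl
      intro j _
      rw [setIntegral_indicator measurableSet_Ioc]
      have hsub : Set.Ioi (0:ℝ) ∩ Set.Ioc (a j) (a (j + 1)) = Set.Ioc (a j) (a (j + 1)) := by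
        apply Set.inter_eq_self_of_subset_right
        intro x hx
        exact lt_of_le_of_lt (ha_nonneg j) hx.1
      rw [hsub, integral_const_mul, Ioc_transform (ha_mono (Nat.le_succ j)) hz0]
    have int1 : IntegrableOn (fun ω => (f ω - φ ω) * e ω) (Set.Ioi 0) := by
      apply (int_fe.sub int_φe).congr
      filter_upwards with ω
      simp only [Pi.sub_apply]
      ring
    rw [hF z hzi]
    have hsplit : (fun ω : ℝ => f ω * Complex.exp (Complex.I * ω * z))
        = fun ω => (f ω - φ ω) * e ω + φ ω * e ω := by
      funext ω; simp only [hedef]; ring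
    rw [hsplit, integral_add int1 int_φe]
    have b1 : ‖∫ ω in Set.Ioi (0:ℝ), (f ω - φ ω) * e ω‖ ≤ ε / 3 := by
      refine le_trans (norm_integral_le_integral_norm _) (le_trans ?_ LL)
      apply setIntegral_mono_on (int1.norm) ((hf.sub φint.integrableOn).norm)
        measurableSet_Ioi
      intro ω hω
      rw [norm_mul]
      calc ‖f ω - φ ω‖ * ‖e ω‖ ≤ ‖f ω - φ ω‖ * 1 := by
            gcongr; exact enorm ω (le_of_lt hω)
      _ = ‖f ω - φ ω‖ := mul_one _
    have b2 : ‖∫ ω in Set.Ioi (0:ℝ), φ ω * e ω‖ ≤ C * (2 / ‖z‖) := by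
      rw [Sval, hCdef, Finset.sum_mul]
      refine le_trans (norm_sum_le _ _) (Finset.sum_le_sum ?_)
      intro j _
      rw [norm_mul]
      gcongr
      exact Ioc_transform_norm (ha_nonneg j) (ha_mono (Nat.le_succ j)) hzi
    calc ‖_ + _‖ ≤ _ + _ := norm_add_le _ _
    _ ≤ ε / 3 + C * (2 / ‖z‖) := add_le_add b1 b2
  -- conclude
  have h1 : ∀ᶠ z in cocompact ℂ ⊓ Filter.principal {z : ℂ | 0 ≤ z.im},
      max (6 * (C + 1) / ε) 1 < ‖z‖ :=
    (tendsto_norm_cocompact_atTop.eventually_gt_atTop _).filter_mono inf_le_left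
  have h2 : ∀ᶠ z in cocompact ℂ ⊓ Filter.principal {z : ℂ | 0 ≤ z.im}, 0 ≤ z.im :=
    Eventually.filter_mono inf_le_right (eventually_principal.2 fun z hz => hz)
  filter_upwards [h1, h2] with z hz1 hz2
  have hzn : 0 < ‖z‖ := lt_trans (lt_of_lt_of_le one_pos (le_max_right _ _)) hz1
  have hz0 : z ≠ 0 := norm_pos_iff.1 hzn
  have hb := key z hz2 hz0
  have hz6 : 6 * (C + 1) / ε < ‖z‖ := lt_of_le_of_lt (le_max_left _ _) hz1
  have h6 : 6 * (C + 1) < ‖z‖ * ε := (div_lt_iff₀ hε).1 hz6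
  have hsmall : C * (2 / ‖z‖) < ε / 3 := by
    rw [mul_comm, div_mul_eq_mul_div, div_lt_iff₀ hzn]
    nlinarith
  linarith
end

section
/- Let f : ℂ → ℂ be holomorphic on the open upper half-plane, continuous on the closed upper half-plane, and suppose f vanishes on an interval [−ε, ε] ⊂ ℝ with ε > 0. Then f vanishes on all of ℝ (and hence on the closed upper half-plane). -/
open Complex Filter

/-- Edge-of-the-wedge / Schwarz reflection: a bounded function holomorphic on the open
upper half-plane, continuous up to the boundary, vanishing on a real interval
`[-ε, ε]`, vanishes on the whole closed upper half-plane. -/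
theorem stmt14 (f : ℂ → ℂ)
    (hd : DifferentiableOn ℂ f {z : ℂ | 0 < z.im})
    (hc : ContinuousOn f {z : ℂ | 0 ≤ z.im})
    (hb : ∃ M : ℝ, ∀ z : ℂ, 0 ≤ z.im → ‖f z‖ ≤ M)
    (ε : ℝ) (hε : 0 < ε)
    (hvanish : ∀ x : ℝ, x ∈ Set.Icc (-ε) ε → f (x : ℂ) = 0) :
    ∀ z : ℂ, 0 ≤ z.im → f z = 0 := by
  obtain ⟨M, hM⟩ := hb
  have hM0 : 0 ≤ M := le_trans (norm_nonneg _) (hM I (by simp))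
  set U : Set ℂ := {z : ℂ | 0 < z.im} with hUdef
  set S : Set ℂ := {z : ℂ | 0 ≤ z.im} with hSdef
  set m : ℂ → ℂ := fun z => -(ε : ℂ) ^ 2 / z with hmdef
  set G : ℂ → ℂ := fun z => f z * f (m z) * (z / (z + I)) with hGdef
  -- basic facts about m
  have hcast : -(ε : ℂ) ^ 2 = ((-(ε ^ 2) : ℝ) : ℂ) := by push_cast; ring
  have hmim : ∀ z : ℂ, (m z).im = ε ^ 2 * z.im / normSq z := by
    intro z
    simp only [hmdef, hcast, Complex.div_im, Complex.ofReal_im, Complex.ofReal_re]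
    ring
  have hmS : ∀ z ∈ S, m z ∈ S := by
    intro z hz
    simp only [hSdef, Set.mem_setOf_eq] at hz ⊢
    rw [hmim]
    exact div_nonneg (mul_nonneg (by positivity) hz) (normSq_nonneg z)
  have hmU : ∀ z ∈ U, m z ∈ U := by
    intro z hz
    simp only [hUdef, Set.mem_setOf_eq] at hz ⊢
    have hz0 : z ≠ 0 := by
      intro h; rw [h] at hz; simp at hz
    rw [hmim]
    exact div_pos (mul_pos (by positivity) hz) (normSq_pos.2 hz0)
  have hmm : ∀ z : ℂ, z ≠ 0 → m (m z) = z := by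
    intro z hz
    have hε' : ((ε : ℂ)) ≠ 0 := by exact_mod_cast hε.ne'
    simp only [hmdef]
    field_simp
  have hzI : ∀ z ∈ S, z + I ≠ 0 := by
    intro z hz h
    have : (z + I).im = 0 := by rw [h]; simp
    simp only [Complex.add_im, Complex.I_im] at this
    simp only [hSdef, Set.mem_setOf_eq] at hz
    linarith
  have habs : ∀ z ∈ S, ‖z / (z + I)‖ ≤ 1 := by
    intro z hz
    have h1 : ‖z‖ ≤ ‖z + I‖ := by
      rw [Complex.norm_def, Complex.norm_def]
      apply Real.sqrt_le_sqrt
      simp only [Complex.normSq_apply, Complex.add_re, Complex.add_im, Complex.I_re,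
        Complex.I_im]
      simp only [hSdef, Set.mem_setOf_eq] at hz
      nlinarith
    have h2 : 0 < ‖z + I‖ := by
      rw [norm_pos_iff]
      exact hzI z hz
    rw [norm_div, div_le_one h2]
    exact h1
  have hGbound : ∀ z ∈ S, ‖G z‖ ≤ M * M := by
    intro z hz
    simp only [hGdef]
    calc ‖f z * f (m z) * (z / (z + I))‖
        = ‖f z‖ * ‖f (m z)‖ * ‖z / (z + I)‖ := by
          rw [norm_mul, norm_mul]
      _ ≤ M * M * 1 := by
          apply mul_le_mul _ (habs z hz) (norm_nonneg _) (by positivity)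
          exact mul_le_mul (hM z hz) (hM _ (hmS z hz)) (norm_nonneg _) hM0
      _ = M * M := mul_one _
  -- continuity of G on S
  have hGcont : ContinuousOn G S := by
    intro z hz
    by_cases hz0 : z = 0
    · subst hz0
      have hG0 : G 0 = 0 := by simp [hGdef]
      unfold ContinuousWithinAt
      rw [hG0]
      apply squeeze_zero_norm' (a := fun z => M * M * ‖z / (z + I)‖)
      · filter_upwards [self_mem_nhdsWithin] with w hw
        simp only [hGdef]
        calc ‖f w * f (m w) * (w / (w + I))‖
            = ‖f w‖ * ‖f (m w)‖ * ‖w / (w + I)‖ := by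
              rw [norm_mul, norm_mul]
          _ ≤ M * M * ‖w / (w + I)‖ := by
              apply mul_le_mul_of_nonneg_right _ (norm_nonneg _)
              exact mul_le_mul (hM w hw) (hM _ (hmS w hw)) (norm_nonneg _) hM0
      · have h0 : Tendsto (fun w : ℂ => M * M * ‖w / (w + I)‖) (nhds 0)
            (nhds (M * M * ‖(0 : ℂ) / (0 + I)‖)) := by
          apply Tendsto.const_mul
          apply continuous_norm.continuousAt.tendsto.comp
          exact (continuousAt_id.div (continuousAt_id.add continuousAt_const)
            (by simp [I_ne_zero])).tendsto
        simpa using h0.mono_left nhdsWithin_le_nhds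
    · have h1 : ContinuousWithinAt f S z := hc z hz
      have hmc : ContinuousWithinAt m S z :=
        (continuousAt_const.div continuousAt_id hz0).continuousWithinAt
      have h2 : ContinuousWithinAt (fun w => f (m w)) S z :=
        (hc (m z) (hmS z hz)).comp hmc hmS
      have h3 : ContinuousWithinAt (fun w : ℂ => w / (w + I)) S z :=
        (continuousAt_id.div (continuousAt_id.add continuousAt_const)
          (hzI z hz)).continuousWithinAt
      exact (h1.mul h2).mul h3
  -- differentiability of G on U
  have hGdiff : DifferentiableOn ℂ G U := by
    intro z hz
    have hzim : 0 < z.im := hz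
    have hz0 : z ≠ 0 := by intro h; rw [h] at hzim; simp at hzim
    have h1 : DifferentiableWithinAt ℂ f U z := hd z hz
    have hmdiff : DifferentiableWithinAt ℂ m U z :=
      ((differentiableAt_const _).div differentiableAt_id hz0).differentiableWithinAt
    have h2 : DifferentiableWithinAt ℂ (fun w => f (m w)) U z :=
      (hd (m z) (hmU z hz)).comp z hmdiff hmU
    have h3 : DifferentiableWithinAt ℂ (fun w : ℂ => w / (w + I)) U z := by
      apply DifferentiableAt.differentiableWithinAt
      apply DifferentiableAt.div
      · exact differentiableAt_id
      · exact differentiableAt_id.add_const I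
      · exact hzI z (show z ∈ S from le_of_lt hzim)
    exact (h1.mul h2).mul h3
  -- the rotated function on the right half-plane
  set H : ℂ → ℂ := fun w => G (I * w) with hHdef
  have hIm : ∀ w : ℂ, (I * w).im = w.re := by intro w; simp [Complex.mul_im]
  have hHd : DiffContOnCl ℂ H {w : ℂ | 0 < w.re} := by
    constructor
    · apply hGdiff.comp ((differentiable_const I).mul differentiable_id).differentiableOn
      intro w hw
      simp only [hUdef, Set.mem_setOf_eq, Pi.mul_apply, id_eq, hIm]
      exact hw
    · rw [closure_setOf_lt_re]
      apply hGcont.comp ((continuous_const.mul continuous_id).continuousOn)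
      intro w hw
      simp only [hSdef, Set.mem_setOf_eq, Pi.mul_apply, id_eq, hIm]
      exact hw
  have hPL : ∀ w : ℂ, 0 ≤ w.re → ‖H w‖ ≤ 0 := by
    intro w hw
    apply PhragmenLindelof.right_half_plane_of_bounded_on_real hHd ?_ ?_ ?_ hw
    · refine ⟨1, one_lt_two, 0, ?_⟩
      apply Asymptotics.IsBigO.of_bound (M * M)
      rw [Filter.eventually_inf_principal]
      apply Eventually.of_forall
      intro z hz
      have : (I * z) ∈ S := by
        simp only [hSdef, Set.mem_setOf_eq, hIm]
        exact le_of_lt hz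
      simpa [hHdef, zero_mul, Real.exp_zero] using hGbound (I * z) this
    · apply isBoundedUnder_of_eventually_le (a := M * M)
      filter_upwards [eventually_ge_atTop (0 : ℝ)] with x hx
      have : (I * (x : ℂ)) ∈ S := by
        simp only [hSdef, Set.mem_setOf_eq, hIm, Complex.ofReal_re]
        exact hx
      exact hGbound _ this
    · intro x
      have hIx : I * ((x : ℂ) * I) = -(x : ℂ) := by
        rw [mul_comm (x : ℂ) I, ← mul_assoc, I_mul_I]
        ring
      have hG0 : G (-(x : ℂ)) = 0 := by
        by_cases hx : |x| ≤ ε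
        · have hv : f (-(x : ℂ)) = 0 := by
            have := hvanish (-x) (by rw [Set.mem_Icc]; rw [abs_le] at hx; constructor <;> linarith)
            rwa [Complex.ofReal_neg] at this
          simp [hGdef, hv]
        · push_neg at hx
          have hx0 : x ≠ 0 := by intro h; rw [h] at hx; simp at hx; linarith
          have hmx : m (-(x : ℂ)) = (((ε ^ 2 / x : ℝ)) : ℂ) := by
            simp only [hmdef]
            push_cast
            field_simp
          have habs2 : |ε ^ 2 / x| ≤ ε := by
            rw [abs_div, _root_.abs_of_nonneg (by positivity : (0:ℝ) ≤ ε ^ 2),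
              div_le_iff₀ (by positivity : (0:ℝ) < |x|)]
            nlinarith [hx.le, hε.le]
          have hv : f (m (-(x : ℂ))) = 0 := by
            rw [hmx]
            exact hvanish _ (Set.mem_Icc.2 (abs_le.1 habs2))
          simp [hGdef, hv]
      rw [hHdef]
      simp only
      rw [hIx, hG0, norm_zero]
  have hG0 : ∀ z ∈ S, G z = 0 := by
    intro z hz
    have h1 : I * (-(I * z)) = z := by
      rw [mul_neg, ← mul_assoc, I_mul_I]; ring
    have h2 : (0 : ℝ) ≤ (-(I * z)).re := by
      simp only [Complex.neg_re, Complex.mul_re, Complex.I_re, Complex.I_im]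
      simpa [hSdef] using hz
    have := hPL (-(I * z)) h2
    rw [norm_le_zero_iff] at this
    rw [hHdef] at this
    simp only at this
    rwa [h1] at this
  have hprod : ∀ z ∈ U, f z * f (m z) = 0 := by
    intro z hz
    have hzim : 0 < z.im := hz
    have hz0 : z ≠ 0 := by intro h; rw [h] at hzim; simp at hzim
    have hne : z / (z + I) ≠ 0 := div_ne_zero hz0 (hzI z (le_of_lt hzim))
    have := hG0 z (show z ∈ S from le_of_lt hzim)
    simp only [hGdef] at this
    exact (mul_eq_zero.1 this).resolve_right hne
  -- identity theorem
  have hUopen : IsOpen U := isOpen_lt continuous_const Complex.continuous_im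
  have hUpre : IsPreconnected U := (convex_halfSpace_im_gt 0).isPreconnected
  have hfan : AnalyticOnNhd ℂ f U := (analyticOnNhd_iff_differentiableOn hUopen).2 hd
  have hgan : AnalyticOnNhd ℂ (fun z => f (m z)) U := by
    apply (analyticOnNhd_iff_differentiableOn hUopen).2
    intro z hz
    have hz0 : z ≠ 0 := by
      intro h; have : (0:ℝ) < z.im := hz; rw [h] at this; simp at this
    exact (hd (m z) (hmU z hz)).comp z
      (((differentiableAt_const _).div differentiableAt_id hz0).differentiableWithinAt) hmU
  have key : ∀ z ∈ U, f z = 0 := by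
    by_cases hall : ∀ z ∈ U, f z = 0
    · exact hall
    · push_neg at hall
      obtain ⟨z₀, hz₀U, hz₀⟩ := hall
      have hVopen : IsOpen (U ∩ f ⁻¹' {(0:ℂ)}ᶜ) :=
        (hd.continuousOn).isOpen_inter_preimage hUopen isOpen_compl_singleton
      have hev : (fun z => f (m z)) =ᶠ[nhds z₀] 0 := by
        apply eventually_of_mem (hVopen.mem_nhds ⟨hz₀U, hz₀⟩)
        rintro w ⟨hwU, hwne⟩
        have := hprod w hwU
        exact (mul_eq_zero.1 this).resolve_left hwne
      have hg0 : Set.EqOn (fun z => f (m z)) 0 U :=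
        hgan.eqOn_zero_of_preconnected_of_eventuallyEq_zero hUpre hz₀U hev
      intro z hz
      have hz0 : z ≠ 0 := by
        intro h; have : (0:ℝ) < z.im := hz; rw [h] at this; simp at this
      have := hg0 (hmU z hz)
      simp only [Pi.zero_apply] at this
      rwa [hmm z hz0] at this
  -- extend to the boundary by continuity
  intro z hz
  rcases lt_or_eq_of_le hz with hlt | heq
  · exact key z hlt
  · have hzc : z ∈ closure U := by
      rw [hUdef, closure_setOf_lt_im]
      exact hz
    have hne : (nhdsWithin z U).NeBot := mem_closure_iff_nhdsWithin_neBot.1 hzc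
    have t1 : Tendsto f (nhdsWithin z U) (nhds (f z)) :=
      (hc z hz).mono_left (nhdsWithin_mono z (fun w hw => show w ∈ S from le_of_lt (show (0:ℝ) < w.im from hw)))
    have t2 : Tendsto f (nhdsWithin z U) (nhds 0) :=
      tendsto_const_nhds.congr' (eventually_nhdsWithin_of_forall (fun w hw => (key w hw).symm))
    exact tendsto_nhds_unique t1 t2
end
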